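/- Let g(ε,J) = ε⁵·log(J)/(496.1·J⁵·cosh⁵(Jε/2 + 0.1475)) on the domain 0 ≤ ε ≤ log 3, 1 ≤ J ≤ e^{1/5}. Then g is monotone increasing in ε: for fixed J in the domain and 0 ≤ ε₁ ≤ ε₂ ≤ log 3, g(ε₁,J) ≤ g(ε₂,J). (Key step: the factor cosh(x + 0.1475) − x·sinh(x + 0.1475) is positive for all x ∈ [0,1].) -/

import Mathlib

open Real

/-- g(ε,J) = ε⁵ log J / (496.1 J⁵ cosh⁵(Jε/2 + 0.1475)) -/
noncomputable def gEJ (ε J : ℝ) : ℝ :=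
  ε ^ 5 * Real.log J / (496.1 * J ^ 5 * (Real.cosh (J * ε / 2 + 0.1475)) ^ 5)

/-! For `J ≥ 1`, `g(ε, J) = (log J / (496.1 J⁵)) · (ε / cosh (J ε / 2 + 0.1475))⁵` with a
nonnegative constant in front, so it suffices that `ε ↦ ε / cosh (a ε + b)` increases. Its
derivative has the sign of `cosh y - x sinh y` with `x = a ε`, `y = a ε + b`, and
`cosh y - x sinh y = e^{-y} + (1 - x) sinh y`, which is positive as soon as `x ≤ 1` and `y ≥ 0`.
On the domain `x = J ε / 2 ≤ e^{1/5} log 3 / 2 < 1`. -/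

open Set

theorem cosh_sub_mul_sinh_pos {x y : ℝ} (hx : x ≤ 1) (hy : 0 ≤ y) :
    0 < cosh y - x * sinh y := by
  have hsplit : cosh y - x * sinh y = exp (-y) + (1 - x) * sinh y := by
    rw [← cosh_sub_sinh]; ring
  rw [hsplit]
  exact add_pos_of_pos_of_nonneg (exp_pos _)
    (mul_nonneg (sub_nonneg.2 hx) (sinh_nonneg_iff.2 hy))

theorem hasDerivAt_div_cosh_mul_add (a b ε : ℝ) :
    HasDerivAt (fun ε => ε / cosh (a * ε + b))
      ((cosh (a * ε + b) - a * ε * sinh (a * ε + b)) / cosh (a * ε + b) ^ 2) ε := by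
  have hinner : HasDerivAt (fun ε => a * ε + b) a ε := by
    simpa using ((hasDerivAt_id ε).const_mul a).add_const b
  refine ((hasDerivAt_id' ε).div hinner.cosh (cosh_pos _).ne').congr_deriv ?_
  ring

theorem monotoneOn_div_cosh_mul_add {a b c : ℝ} (ha : 0 ≤ a) (hb : 0 ≤ b) (hac : a * c ≤ 1) :
    MonotoneOn (fun ε => ε / cosh (a * ε + b)) (Icc 0 c) := by
  refine monotoneOn_of_hasDerivWithinAt_nonneg (convex_Icc 0 c)
    (fun ε _ => (hasDerivAt_div_cosh_mul_add a b ε).continuousAt.continuousWithinAt)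
    (fun ε _ => (hasDerivAt_div_cosh_mul_add a b ε).hasDerivWithinAt) fun ε hε => ?_
  rw [interior_Icc] at hε
  have hx : a * ε ≤ 1 := (mul_le_mul_of_nonneg_left hε.2.le ha).trans hac
  have hy : 0 ≤ a * ε + b := by nlinarith [hε.1]
  exact div_nonneg (cosh_sub_mul_sinh_pos hx hy).le (by positivity)

theorem gEJ_eq_mul_pow (ε J : ℝ) :
    gEJ ε J = log J / (496.1 * J ^ 5) * (ε / cosh (J / 2 * ε + 0.1475)) ^ 5 := by
  rw [gEJ, div_pow, div_mul_div_comm, mul_comm (log J), mul_div_assoc, mul_div_assoc]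
  ring_nf

theorem half_mul_log_three_le_one {J : ℝ} (hJ : J ≤ exp (1 / 5)) : J / 2 * log 3 ≤ 1 := by
  have hexp : exp (1 / 5) ≤ 5 / 4 := by
    convert exp_bound_div_one_sub_of_interval (x := 1 / 5) (by norm_num) (by norm_num) using 1
    norm_num
  have hlog : 0 ≤ log 3 := log_nonneg (by norm_num)
  nlinarith [log_three_lt_d9]

theorem gEJ_mono_in_eps :
    (∀ J ε₁ ε₂ : ℝ, 1 ≤ J → J ≤ Real.exp (1 / 5) →
      0 ≤ ε₁ → ε₁ ≤ ε₂ → ε₂ ≤ Real.log 3 → gEJ ε₁ J ≤ gEJ ε₂ J) ∧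
    (∀ x : ℝ, 0 ≤ x → x ≤ 1 →
      0 < Real.cosh (x + 0.1475) - x * Real.sinh (x + 0.1475)) := by
  refine ⟨fun J ε₁ ε₂ hJ₁ hJ₂ h₀ h₁₂ h₂ => ?_,
    fun x hx₀ hx₁ => cosh_sub_mul_sinh_pos hx₁ (by positivity)⟩
  have hmono := monotoneOn_div_cosh_mul_add (b := 0.1475) (by positivity) (by norm_num)
    (half_mul_log_three_le_one hJ₂)
  rw [gEJ_eq_mul_pow, gEJ_eq_mul_pow]
  refine mul_le_mul_of_nonneg_left (pow_le_pow_left₀ ?_ ?_ 5) ?_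
  · exact div_nonneg h₀ (cosh_pos _).le
  · exact hmono ⟨h₀, h₁₂.trans h₂⟩ ⟨h₀.trans h₁₂, h₂⟩ h₁₂
  · exact div_nonneg (log_nonneg hJ₁) (by positivity)
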